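/- arXiv:1712.01762 — 2 statements merged into one kernel-verified Lean document; each statement's English description precedes it below -/
import Mathlib

section
/- Laplace transform of the ABC derivative: for differentiable Laplace-transformable f with f' ∈ L¹ and 0 < α < 1, L[^{ABC}D^α_{0+} f](s) = (B(α)/(1-α)) · s^{α-1}/(s^α + α/(1-α)) · (s L[f](s) - f(0)) for s real with s^α > α/(1-α). -/
open Real MeasureTheory Filter

/-- Mittag-Leffler function `E_α(z) = Σ z^n / Γ(αn+1)`. -/
noncomputable def mittagLeffler (α z : ℝ) : ℝ :=
  ∑' n : ℕ, z ^ n / Real.Gamma (α * n + 1)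

/-- Riemann–Liouville fractional integral of order `β ≥ 0` with base point `a`
(the identity for `β = 0`). -/
noncomputable def RL (a β : ℝ) (f : ℝ → ℝ) (t : ℝ) : ℝ :=
  if β = 0 then f t
  else (1 / Real.Gamma β) * ∫ τ in a..t, (t - τ) ^ (β - 1) * f τ

/-- ABR (Atangana–Baleanu, Riemann–Liouville type) fractional derivative,
with normalisation value `B = B(α)`. -/
noncomputable def ABR (B a α : ℝ) (f : ℝ → ℝ) (t : ℝ) : ℝ :=
  (B / (1 - α)) *
    deriv (fun s => ∫ x in a..s, f x * mittagLeffler α (-α / (1 - α) * (s - x) ^ α)) t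

/-- ABC (Atangana–Baleanu, Caputo type) fractional derivative. -/
noncomputable def ABC (B a α : ℝ) (f : ℝ → ℝ) (t : ℝ) : ℝ :=
  (B / (1 - α)) *
    ∫ x in a..t, deriv f x * mittagLeffler α (-α / (1 - α) * (t - x) ^ α)

/-- AB fractional integral. -/
noncomputable def ABI (B a α : ℝ) (f : ℝ → ℝ) (t : ℝ) : ℝ :=
  ((1 - α) / B) * f t + (α / B) * RL a α f t

/-- Laplace transform (for real `s`). -/
noncomputable def laplace (f : ℝ → ℝ) (s : ℝ) : ℝ :=
  ∫ t in Set.Ioi (0 : ℝ), Real.exp (-s * t) * f t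

/-! The ABC derivative is `B/(1-α)` times the causal convolution of `f'` with the kernel
`k(u) = E_α(-λ u^α)`, `λ = α/(1-α)`. Extending the exponentially damped factors by zero to
`(-∞, 0]` turns the Laplace transform of a causal convolution into the integral of a full-line
convolution, hence into the product of the Laplace transforms. With the kernel `1` and the
fundamental theorem of calculus this also gives `L[f'](s) = s L[f](s) - f(0)`. Finally `L[k]` is
computed termwise: `Σ (-λ)ⁿ / s^(αn+1) = s^(α-1) / (s^α + λ)`, a geometric series that converges
absolutely because `λ < s^α`. -/

open Set

lemma laplace_const_mul (c s : ℝ) (f : ℝ → ℝ) :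
    laplace (fun t => c * f t) s = c * laplace f s := by
  simp only [laplace, mul_left_comm _ c, integral_const_mul]

lemma laplace_rpow {s β : ℝ} (hs : 0 < s) (hβ : -1 < β) :
    laplace (fun u => u ^ β) s = Real.Gamma (β + 1) / s ^ (β + 1) := by
  have h := Real.integral_rpow_mul_exp_neg_mul_Ioi (a := β + 1) (by linarith) hs
  rw [add_sub_cancel_right, Real.div_rpow zero_le_one hs.le, Real.one_rpow] at h
  simp only [laplace, neg_mul, mul_comm (Real.exp _)]
  rw [h]
  ring

-- A function whose integral is nonzero is integrable, since non-integrable ones integrate to `0`.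
lemma integrableOn_exp_neg_mul_rpow {s β : ℝ} (hs : 0 < s) (hβ : -1 < β) :
    IntegrableOn (fun u => Real.exp (-s * u) * u ^ β) (Ioi 0) :=
  Integrable.of_integral_ne_zero <| by
    rw [← laplace, laplace_rpow hs hβ]
    exact (div_pos (Real.Gamma_pos_of_pos (by linarith)) (by positivity)).ne'

lemma laplace_one {s : ℝ} (hs : 0 < s) : laplace (fun _ => 1) s = 1 / s := by
  simpa using laplace_rpow hs (β := 0) (by norm_num)

lemma MeasureTheory.IntegrableOn.exp_neg_mul_Ioi {s : ℝ} (hs : 0 ≤ s) {g : ℝ → ℝ}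
    (hg : IntegrableOn g (Ioi 0)) :
    IntegrableOn (fun x => Real.exp (-s * x) * g x) (Ioi 0) := by
  refine hg.bdd_mul (c := 1) (by fun_prop) ?_
  filter_upwards [self_mem_ae_restrict measurableSet_Ioi] with x (hx : 0 < x)
  rw [Real.norm_of_nonneg (Real.exp_nonneg _), Real.exp_le_one_iff]
  nlinarith

open scoped Convolution in
lemma laplace_intervalIntegral_mul_sub {s : ℝ} {g k : ℝ → ℝ}
    (hg : IntegrableOn (fun x => Real.exp (-s * x) * g x) (Ioi 0))
    (hk : IntegrableOn (fun u => Real.exp (-s * u) * k u) (Ioi 0)) :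
    laplace (fun t => ∫ x in (0 : ℝ)..t, g x * k (t - x)) s = laplace g s * laplace k s := by
  set G := (Ioi (0 : ℝ)).indicator fun x => Real.exp (-s * x) * g x with hG_def
  set K := (Ioi (0 : ℝ)).indicator fun u => Real.exp (-s * u) * k u with hK_def
  have hconv : (Ioi (0 : ℝ)).indicator
      (fun t => Real.exp (-s * t) * ∫ x in (0 : ℝ)..t, g x * k (t - x))
      = G ⋆[ContinuousLinearMap.mul ℝ ℝ] K := by
    ext t
    rw [convolution_mul]
    have hGK : (fun x => G x * K (t - x)) = (Ioo 0 t).indicator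
        fun x => Real.exp (-s * t) * (g x * k (t - x)) := by
      ext x
      rw [hG_def, hK_def]
      by_cases hx : x ∈ Ioo 0 t
      · have hx0 : x ∈ Ioi 0 := hx.1
        have hxt : t - x ∈ Ioi 0 := sub_pos.2 hx.2
        rw [indicator_of_mem hx, indicator_of_mem hx0, indicator_of_mem hxt,
          show -s * t = -s * x + -s * (t - x) by ring, Real.exp_add]
        ring
      · rw [indicator_of_notMem hx]
        by_cases hx0 : x ∈ Ioi 0
        · have hxt : t - x ∉ Ioi 0 := fun h => hx ⟨hx0, sub_pos.1 h⟩
          rw [indicator_of_notMem hxt, mul_zero]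
        · rw [indicator_of_notMem hx0, zero_mul]
    rw [hGK, integral_indicator measurableSet_Ioo]
    by_cases ht : t ∈ Ioi 0
    · rw [indicator_of_mem ht, integral_const_mul, ← integral_Ioc_eq_integral_Ioo,
        intervalIntegral.integral_of_le (le_of_lt ht)]
    · rw [indicator_of_notMem ht, Ioo_eq_empty ht,
        Measure.restrict_empty, integral_zero_measure]
  have hG : Integrable G := (integrable_indicator_iff measurableSet_Ioi).2 hg
  have hK : Integrable K := (integrable_indicator_iff measurableSet_Ioi).2 hk
  rw [laplace, ← integral_indicator measurableSet_Ioi, hconv, integral_convolution _ hG hK,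
    integral_indicator measurableSet_Ioi, integral_indicator measurableSet_Ioi]
  rfl

lemma intervalIntegral_deriv_eq_sub {s t : ℝ} {f : ℝ → ℝ} (ht : 0 ≤ t) (hf : Differentiable ℝ f)
    (hf' : IntegrableOn (fun x => Real.exp (-s * x) * deriv f x) (Ioi 0)) :
    ∫ x in (0 : ℝ)..t, deriv f x = f t - f 0 := by
  have hdamped : IntervalIntegrable (fun x => Real.exp (-s * x) * deriv f x) volume 0 t :=
    (intervalIntegrable_iff_integrableOn_Ioc_of_le ht).2 (hf'.mono_set Ioc_subset_Ioi_self)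
  have hint : IntervalIntegrable (deriv f) volume 0 t := by
    refine (hdamped.continuousOn_mul (g := fun x => Real.exp (s * x)) (by fun_prop)).congr ?_
    intro x _
    dsimp only
    rw [← mul_assoc, ← Real.exp_add, show s * x + -s * x = 0 by ring, Real.exp_zero, one_mul]
  exact intervalIntegral.integral_eq_sub_of_hasDerivAt (fun x _ => (hf x).hasDerivAt) hint

lemma laplace_deriv {s : ℝ} {f : ℝ → ℝ} (hs : 0 < s) (hf : Differentiable ℝ f)
    (hf' : IntegrableOn (fun x => Real.exp (-s * x) * deriv f x) (Ioi 0))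
    (hlap : IntegrableOn (fun t => Real.exp (-s * t) * f t) (Ioi 0)) :
    laplace (deriv f) s = s * laplace f s - f 0 := by
  have hexp : IntegrableOn (fun u => Real.exp (-s * u)) (Ioi 0) := exp_neg_integrableOn_Ioi 0 hs
  have hconv := laplace_intervalIntegral_mul_sub (k := fun _ => 1) hf' (by simpa using hexp)
  have hFTC : laplace (fun t => ∫ x in (0 : ℝ)..t, deriv f x * 1) s
      = laplace f s - f 0 * laplace (fun _ => 1) s := by
    simp only [laplace, mul_one]
    rw [setIntegral_congr_fun measurableSet_Ioi fun t (ht : 0 < t) => by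
      rw [intervalIntegral_deriv_eq_sub ht.le hf hf', mul_sub],
      integral_sub hlap (hexp.mul_const (f 0)), ← integral_const_mul]
    simp only [mul_comm]
  rw [hFTC, laplace_one hs] at hconv
  field_simp at hconv
  linarith

lemma integral_mittagLeffler_term {α s : ℝ} (hα : 0 ≤ α) (hs : 0 < s) (c : ℝ) (n : ℕ) :
    ∫ u in Ioi 0, c ^ n / Real.Gamma (α * n + 1) * (Real.exp (-s * u) * u ^ (α * n))
      = (c / s ^ α) ^ n / s := by
  have hαn : 0 ≤ α * n := by positivity
  have hΓ : Real.Gamma (α * n + 1) ≠ 0 := (Real.Gamma_pos_of_pos (by linarith)).ne'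
  have hpow : s ^ (α * n + 1) = (s ^ α) ^ n * s := by
    rw [Real.rpow_add hs, Real.rpow_one, Real.rpow_mul hs.le, Real.rpow_natCast]
  rw [integral_const_mul, ← laplace, laplace_rpow hs (by linarith), hpow, div_pow]
  field_simp

lemma laplace_mittagLeffler {α s c : ℝ} (hα : 0 ≤ α) (hs : 0 < s) (hc : |c| < s ^ α) :
    laplace (fun u => mittagLeffler α (c * u ^ α)) s = s ^ (α - 1) / (s ^ α - c) := by
  set F : ℕ → ℝ → ℝ := fun n u =>
    c ^ n / Real.Gamma (α * n + 1) * (Real.exp (-s * u) * u ^ (α * n)) with hF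
  have hsα : 0 < s ^ α := by positivity
  have hF_int (n : ℕ) : IntegrableOn (F n) (Ioi 0) :=
    (integrableOn_exp_neg_mul_rpow hs (by linarith [show 0 ≤ α * n by positivity])).const_mul _
  have hF_norm (n : ℕ) : ∫ u in Ioi 0, ‖F n u‖ = (|c| / s ^ α) ^ n / s := by
    rw [← integral_mittagLeffler_term hα hs]
    refine setIntegral_congr_fun measurableSet_Ioi fun u (hu : 0 < u) => ?_
    have hΓ : 0 < Real.Gamma (α * n + 1) := Real.Gamma_pos_of_pos (by positivity)
    simp only [hF, norm_mul, norm_div, norm_pow, Real.norm_eq_abs, abs_of_pos hΓ,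
      abs_of_pos (Real.exp_pos _), abs_of_pos (Real.rpow_pos_of_pos hu _)]
  have hF_sum : HasSum (fun n => ∫ u in Ioi 0, F n u) (∫ u in Ioi 0, ∑' n, F n u) :=
    hasSum_integral_of_summable_integral_norm hF_int <| by
      simp only [hF_norm]
      exact (summable_geometric_of_lt_one (by positivity) ((div_lt_one hsα).2 hc)).div_const s
  have hseries : ∀ u ∈ Ioi (0 : ℝ),
      Real.exp (-s * u) * mittagLeffler α (c * u ^ α) = ∑' n, F n u := by
    intro u (hu : 0 < u)
    rw [mittagLeffler, ← tsum_mul_left]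
    refine tsum_congr fun n => ?_
    rw [mul_pow, ← Real.rpow_natCast (u ^ α), ← Real.rpow_mul hu.le]
    ring
  have hratio : ‖c / s ^ α‖ < 1 := by
    rwa [Real.norm_eq_abs, abs_div, abs_of_pos hsα, div_lt_one hsα]
  rw [laplace, setIntegral_congr_fun measurableSet_Ioi hseries, ← hF_sum.tsum_eq]
  simp only [hF, integral_mittagLeffler_term hα hs]
  rw [tsum_div_const, tsum_geometric_of_norm_lt_one hratio, Real.rpow_sub_one hs.ne']
  have : s ^ α - c ≠ 0 := by linarith [le_abs_self c]
  field_simp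

lemma integrableOn_exp_neg_mul_mittagLeffler {α s c : ℝ} (hα : 0 ≤ α) (hs : 0 < s)
    (hc : |c| < s ^ α) :
    IntegrableOn (fun u => Real.exp (-s * u) * mittagLeffler α (c * u ^ α)) (Ioi 0) :=
  Integrable.of_integral_ne_zero <| by
    rw [← laplace, laplace_mittagLeffler hα hs hc]
    have : 0 < s ^ α - c := by linarith [le_abs_self c]
    positivity

theorem laplace_ABC_general (α B s : ℝ) (f : ℝ → ℝ)
    (hα0 : 0 < α) (hα1 : α < 1) (hs : 0 < s)
    (hdiff : Differentiable ℝ f)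
    (hf' : IntegrableOn (deriv f) (Set.Ioi (0:ℝ)))
    (hlap : IntegrableOn (fun t => Real.exp (-s * t) * f t) (Set.Ioi (0:ℝ)))
    (hconv : α / (1 - α) < s ^ α) :
    laplace (ABC B 0 α f) s
      = (B / (1 - α)) * (s ^ (α - 1) / (s ^ α + α / (1 - α)))
          * (s * laplace f s - f 0) := by
  set c := -α / (1 - α) with hc_def
  have hc : |c| < s ^ α := by
    rwa [hc_def, neg_div, abs_neg, abs_of_pos (div_pos hα0 (sub_pos.2 hα1))]
  have hf's := hf'.exp_neg_mul_Ioi hs.le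
  have hABC : ABC B 0 α f = fun t =>
      B / (1 - α) * ∫ x in (0 : ℝ)..t, deriv f x * mittagLeffler α (c * (t - x) ^ α) := rfl
  rw [hABC, laplace_const_mul,
    laplace_intervalIntegral_mul_sub hf's (integrableOn_exp_neg_mul_mittagLeffler hα0.le hs hc),
    laplace_deriv hs hdiff hf's hlap, laplace_mittagLeffler hα0.le hs hc, hc_def]
  ring

/-- Laplace transform of the ABC derivative. -/
theorem laplace_ABC (α B s : ℝ) (f : ℝ → ℝ)
    (hα0 : 0 < α) (hα1 : α < 1) (hB : 0 < B) (hs : 0 < s)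
    (hdiff : Differentiable ℝ f)
    (hf' : IntegrableOn (deriv f) (Set.Ioi (0:ℝ)))
    (hlap : IntegrableOn (fun t => Real.exp (-s * t) * f t) (Set.Ioi (0:ℝ)))
    (hconv : α / (1 - α) < s ^ α) :
    laplace (ABC B 0 α f) s
      = (B / (1 - α)) * (s ^ (α - 1) / (s ^ α + α / (1 - α)))
          * (s * laplace f s - f 0) :=
  laplace_ABC_general α B s f hα0 hα1 hs hdiff hf' hlap hconv
end

section
/- ABC derivative of the power series ansatz: if f(t) = Σ_{k=0}^∞ a_k t^{kα} converges with suitable growth conditions (0 < α < 1), then ^{ABC}D^α_{0+} f(t) = Σ_{m=1}^∞ [ (B(α)/(1-α)) Σ_{k=1}^m a_k (-α/(1-α))^{m-k} Γ(kα+1)/Γ(mα+1) ] t^{mα}. -/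
open Real MeasureTheory Filter

/-!
Differentiate `f(x) = ∑ aₖ x^{αk}` termwise and expand `f'(x) E_α(c (t - x)^α)`, where
`c = -α/(1-α)`, as a double series in `(k, n)`. Each term integrates over `[0, t]` to a
Riemann–Liouville integral of a power, `I^{αn+1}(p x^{p-1}) = Γ(p+1)/Γ(p+αn+1) t^{p+αn}`
(a Beta integral). The integrated double series converges absolutely, because
`Γ(p+1) Γ(q+1) ≤ Γ(p+q+2)` (the Beta function is at most `1`) and `Γ(αn+1)` grows faster than any
geometric sequence (log-convexity of `Γ`); this justifies exchanging sum and integral, and grouping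
the terms by total degree `m = k + n` gives the stated coefficients.
-/

open Set

theorem integral_rpow_mul_sub_rpow {p q T : ℝ} (hp : 0 < p) (hq : 0 < q) (hT : 0 < T) :
    ∫ x in (0 : ℝ)..T, x ^ (p - 1) * (T - x) ^ (q - 1)
      = Gamma p * Gamma q / Gamma (p + q) * T ^ (p + q - 1) := by
  have hcomplex : ∫ x in (0 : ℝ)..T, ((x ^ (p - 1) * (T - x) ^ (q - 1) : ℝ) : ℂ)
      = ∫ x in (0 : ℝ)..T, (x : ℂ) ^ ((p : ℂ) - 1) * ((T : ℂ) - x) ^ ((q : ℂ) - 1) := by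
    refine intervalIntegral.integral_congr fun x hx => ?_
    rw [uIcc_of_le hT.le] at hx
    push_cast [Complex.ofReal_cpow hx.1, Complex.ofReal_cpow (sub_nonneg.2 hx.2)]
    rfl
  apply Complex.ofReal_injective
  rw [← intervalIntegral.integral_ofReal, hcomplex, Complex.betaIntegral_scaled _ _ hT,
    Complex.betaIntegral_eq_Gamma_mul_div _ _ (by simpa using hp) (by simpa using hq)]
  push_cast [Complex.ofReal_cpow hT.le, ← Complex.Gamma_ofReal]
  ring

theorem Gamma_add_one_mul_Gamma_add_one_le {p q : ℝ} (hp : 0 ≤ p) (hq : 0 ≤ q) :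
    Gamma (p + 1) * Gamma (q + 1) ≤ Gamma (p + q + 2) := by
  have hbeta := integral_rpow_mul_sub_rpow (by linarith : 0 < p + 1) (by linarith : 0 < q + 1)
    one_pos
  simp only [add_sub_cancel_right, one_rpow, mul_one] at hbeta
  have hle : ∫ x in (0 : ℝ)..1, x ^ p * (1 - x) ^ q ≤ ∫ _ in (0 : ℝ)..1, (1 : ℝ) := by
    refine intervalIntegral.integral_mono_on zero_le_one ?_ intervalIntegrable_const
      fun x hx => ?_
    · exact ((continuous_id.rpow_const fun _ => Or.inr hp).mul
        ((continuous_const.sub continuous_id).rpow_const fun _ => Or.inr hq)).intervalIntegrable _ _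
    · exact mul_le_one₀ (rpow_le_one hx.1 hx.2 hp) (rpow_nonneg (by linarith [hx.2]) _)
        (rpow_le_one (by linarith [hx.2]) (by linarith [hx.1]) hq)
  rw [hbeta, intervalIntegral.integral_const, sub_zero, smul_eq_mul, mul_one,
    div_le_one (Gamma_pos_of_pos (by linarith))] at hle
  rwa [show p + q + 2 = p + 1 + (q + 1) by ring]

theorem Gamma_add_one_div_Gamma_add_add_one_le {p q : ℝ} (hp : 0 ≤ p) (hq : 0 ≤ q) :
    Gamma (p + 1) / Gamma (p + q + 1) ≤ (p + q + 1) / Gamma (q + 1) := by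
  rw [div_le_div_iff₀ (Gamma_pos_of_pos (by linarith)) (Gamma_pos_of_pos (by linarith))]
  calc Gamma (p + 1) * Gamma (q + 1) ≤ Gamma (p + q + 1 + 1) := by
        convert Gamma_add_one_mul_Gamma_add_one_le hp hq using 2; ring
    _ = (p + q + 1) * Gamma (p + q + 1) := Gamma_add_one (by linarith)

/-- Log-convexity of `Γ` along `x + 1 = α (x + α) + (1 - α) (x + α + 1)`. -/
theorem Gamma_div_Gamma_add_le {α x : ℝ} (hα0 : 0 < α) (hα1 : α < 1) (hx : 0 < x) :
    Gamma x / Gamma (x + α) ≤ (x + α) ^ (1 - α) / x := by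
  have hxα : 0 < x + α := by linarith
  have hΓ : 0 < Gamma (x + α) := Gamma_pos_of_pos hxα
  have hconv := Gamma_mul_add_mul_le_rpow_Gamma_mul_rpow_Gamma hxα (by linarith : 0 < x + α + 1)
    hα0 (by linarith : 0 < 1 - α) (by ring)
  rw [show α * (x + α) + (1 - α) * (x + α + 1) = x + 1 by ring, Gamma_add_one hx.ne',
    Gamma_add_one hxα.ne', mul_rpow hxα.le hΓ.le, mul_left_comm, ← rpow_add hΓ, add_sub_cancel,
    rpow_one] at hconv
  rw [div_le_div_iff₀ hΓ hx]
  linarith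

theorem tendsto_Gamma_div_Gamma_add {α : ℝ} (hα0 : 0 < α) (hα1 : α < 1) :
    Tendsto (fun n : ℕ => Gamma (α * n + 1) / Gamma (α * n + 1 + α)) atTop (nhds 0) := by
  refine squeeze_zero (fun n => (div_pos (Gamma_pos_of_pos (by positivity))
    (Gamma_pos_of_pos (by positivity))).le) (g := fun n : ℕ => 2 ^ (1 - α) * (α * n + 1) ^ (-α))
    (fun n => ?_) ?_
  · set x : ℝ := α * n + 1
    have hx : 1 ≤ x := by simp only [x]; nlinarith [(n.cast_nonneg : (0 : ℝ) ≤ n)]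
    calc Gamma x / Gamma (x + α) ≤ (x + α) ^ (1 - α) / x :=
          Gamma_div_Gamma_add_le hα0 hα1 (by linarith)
      _ ≤ (2 * x) ^ (1 - α) / x := by gcongr; linarith
      _ = 2 ^ (1 - α) * x ^ (-α) := by
          rw [mul_rpow zero_le_two (by linarith), rpow_sub (by linarith : (0 : ℝ) < x), rpow_one,
            rpow_neg (by linarith)]
          field_simp
  · have hx : Tendsto (fun n : ℕ => α * (n : ℝ) + 1) atTop atTop :=
      tendsto_atTop_add_const_right _ 1 (tendsto_natCast_atTop_atTop.const_mul_atTop hα0)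
    simpa using ((tendsto_rpow_neg_atTop hα0).comp hx).const_mul (2 ^ (1 - α))

theorem summable_succ_mul_pow_div_Gamma {α : ℝ} (hα0 : 0 < α) (hα1 : α < 1) (z : ℝ) :
    Summable fun n : ℕ => ((n : ℝ) + 1) * z ^ n / Gamma (α * n + 1) := by
  set ratio : ℕ → ℝ := fun n =>
    ((n : ℝ) + 2) / ((n : ℝ) + 1) * |z| * (Gamma (α * n + 1) / Gamma (α * n + 1 + α))
  have hratio : Tendsto ratio atTop (nhds 0) := by
    have h := tendsto_add_mul_div_add_mul_atTop_nhds (2 : ℝ) 1 1 one_ne_zero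
    simp only [one_mul, div_one, add_comm (2 : ℝ), add_comm (1 : ℝ)] at h
    simpa using (h.mul_const |z|).mul (tendsto_Gamma_div_Gamma_add hα0 hα1)
  refine summable_of_ratio_norm_eventually_le one_half_lt_one ?_
  filter_upwards [hratio.eventually (ge_mem_nhds one_half_pos)] with n hn
  have hΓ : 0 < Gamma (α * n + 1) := Gamma_pos_of_pos (by positivity)
  have hΓ' : 0 < Gamma (α * n + 1 + α) := Gamma_pos_of_pos (by positivity)
  have hstep : ‖((n + 1 : ℕ) + 1 : ℝ) * z ^ (n + 1) / Gamma (α * (n + 1 : ℕ) + 1)‖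
      = ratio n * ‖((n : ℝ) + 1) * z ^ n / Gamma (α * n + 1)‖ := by
    simp only [ratio, Real.norm_eq_abs, abs_div, abs_mul, abs_pow, abs_of_pos hΓ]
    rw [show α * ((n + 1 : ℕ) : ℝ) + 1 = α * n + 1 + α by push_cast; ring, abs_of_pos hΓ',
      abs_of_pos (by positivity : (0 : ℝ) < (n + 1 : ℕ) + 1),
      abs_of_pos (by positivity : (0 : ℝ) < n + 1)]
    field_simp
    push_cast
    ring
  rw [hstep]
  exact mul_le_mul_of_nonneg_right hn (norm_nonneg _)

theorem RL_mul_rpow_sub_one {p q t : ℝ} (hp : 0 < p) (hq : 0 ≤ q) (ht : 0 < t) :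
    RL 0 (q + 1) (fun x => p * x ^ (p - 1)) t
      = Gamma (p + 1) / Gamma (p + q + 1) * t ^ (p + q) := by
  have hβ : ∫ x in (0 : ℝ)..t, (t - x) ^ (q + 1 - 1) * (p * x ^ (p - 1))
      = p * ∫ x in (0 : ℝ)..t, x ^ (p - 1) * (t - x) ^ (q + 1 - 1) := by
    rw [← intervalIntegral.integral_const_mul]
    exact intervalIntegral.integral_congr fun x _ => by ring
  rw [RL, if_neg (by linarith), hβ, integral_rpow_mul_sub_rpow hp (by linarith) ht,
    Gamma_add_one hp.ne', show p + (q + 1) = p + q + 1 by ring, add_sub_cancel_right]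
  field_simp

theorem summable_abs_mul_succ_mul_pow {a : ℕ → ℝ} {r R : ℝ}
    (hR : Summable fun k => a k * R ^ k) (hr : 0 ≤ r) (hrR : r < R) :
    Summable fun k : ℕ => |a k| * ((k : ℝ) + 1) * r ^ k := by
  obtain ⟨M, hM⟩ := hR.tendsto_atTop_zero.norm.bddAbove_range
  have hR0 : 0 < R := hr.trans_lt hrR
  have hq0 : 0 ≤ r / R := div_nonneg hr hR0.le
  have hq1 : r / R < 1 := (div_lt_one hR0).2 hrR
  have hgeom : Summable fun k : ℕ => M * (((k : ℝ) + 1) * (r / R) ^ k) := by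
    refine (((summable_pow_mul_geometric_of_norm_lt_one (r := r / R) 1 ?_).add
      (summable_geometric_of_lt_one hq0 hq1)).mul_left M).congr fun k => by ring
    rwa [Real.norm_eq_abs, abs_of_nonneg hq0]
  refine hgeom.of_nonneg_of_le (fun k => by positivity) fun k => ?_
  have hbound : |a k| * R ^ k ≤ M := by
    simpa [abs_mul, abs_of_pos hR0] using hM ⟨k, rfl⟩
  calc |a k| * ((k : ℝ) + 1) * r ^ k = |a k| * R ^ k * (((k : ℝ) + 1) * (r / R) ^ k) := by
        rw [div_pow]; field_simp
    _ ≤ M * (((k : ℝ) + 1) * (r / R) ^ k) := by gcongr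

theorem summable_abs_mul_succ_mul_rpow {α r R : ℝ} {a : ℕ → ℝ} (hα : 0 < α)
    (hR : Summable fun k : ℕ => a k * R ^ (α * k)) (hr : 0 ≤ r) (hrR : r < R) :
    Summable fun k : ℕ => |a k| * ((k : ℝ) + 1) * r ^ (α * k) := by
  simp only [rpow_mul_natCast (hr.trans hrR.le), rpow_mul_natCast hr] at hR ⊢
  exact summable_abs_mul_succ_mul_pow hR (rpow_nonneg hr α) (rpow_lt_rpow hr hrR hα)

theorem hasDerivAt_tsum_mul_rpow {α R x : ℝ} {a : ℕ → ℝ} (hα : 0 < α)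
    (hR : Summable fun k : ℕ => a k * R ^ (α * k)) (hx : 0 < x) (hxR : x < R) :
    HasDerivAt (fun y => ∑' k : ℕ, a k * y ^ (α * k))
      (∑' k : ℕ, a k * (α * k * x ^ (α * k - 1))) x := by
  obtain ⟨r, hxr, hrR⟩ := exists_between hxR
  have hr : 0 < r := hx.trans hxr
  have hdom := (summable_abs_mul_succ_mul_rpow hα hR hr.le hrR).mul_left (2 * α / x)
  refine hasDerivAt_tsum_of_isPreconnected hdom isOpen_Ioo isPreconnected_Ioo
    (fun k y hy => (hasDerivAt_rpow_const (Or.inl (by linarith [hy.1]))).const_mul (a k))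
    (fun k y hy => ?_) (⟨by linarith, hxr⟩ : x ∈ Ioo (x / 2) r) ?_
    ⟨by linarith, hxr⟩
  · have hy0 : 0 < y := by linarith [hy.1]
    have hpow : y ^ (α * k - 1) ≤ r ^ (α * k) / (x / 2) := by
      rw [rpow_sub hy0, rpow_one]
      exact div_le_div₀ (by positivity) (rpow_le_rpow hy0.le hy.2.le (by positivity))
        (by positivity) hy.1.le
    rw [Real.norm_eq_abs, abs_mul, abs_of_nonneg (by positivity : 0 ≤ α * k * y ^ (α * k - 1))]
    calc |a k| * (α * k * y ^ (α * k - 1)) ≤ |a k| * (α * (k + 1) * (r ^ (α * k) / (x / 2))) := by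
          gcongr; linarith
      _ = 2 * α / x * (|a k| * ((k : ℝ) + 1) * r ^ (α * k)) := by field_simp
  · refine .of_norm_bounded (summable_abs_mul_succ_mul_rpow hα hR hx.le hxR) fun k => ?_
    rw [Real.norm_eq_abs, abs_mul, abs_of_nonneg (rpow_nonneg hx.le _)]
    exact mul_le_mul_of_nonneg_right (le_mul_of_one_le_right (abs_nonneg _) (by simp))
      (rpow_nonneg hx.le _)

open Finset in
theorem HasSum.sum_antidiagonal {A M : Type*} [AddCommMonoid A] [HasAntidiagonal A]
    [AddCommMonoid M] [TopologicalSpace M] [ContinuousAdd M] [RegularSpace M]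
    {f : A × A → M} {s : M} (hf : HasSum f s) :
    HasSum (fun n => ∑ p ∈ antidiagonal n, f p) s :=
  (HasAntidiagonal.sigmaAntidiagonalEquivProd.hasSum_iff.2 hf).sigma fun n => by
    rw [← Finset.sum_coe_sort]
    exact hasSum_fintype _

-- The constant term of `∑ aₖ x^{αk}` has zero derivative, so the index is shifted by one.
noncomputable def powDerivTerm (α : ℝ) (a : ℕ → ℝ) (k : ℕ) (x : ℝ) : ℝ :=
  a (k + 1) * (α * (k + 1) * x ^ (α * (k + 1) - 1))

noncomputable def mittagLefflerTerm (α z : ℝ) (n : ℕ) : ℝ :=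
  z ^ n / Gamma (α * n + 1)

/-- `abcTerm α c t a (k, n) x` is the `(k, n)` term of the double series for
`f'(x) E_α(c (t - x)^α)`, and `abcCoeff α c t a (k, n)` is its integral over `[0, t]`. -/
noncomputable def abcTerm (α c t : ℝ) (a : ℕ → ℝ) (p : ℕ × ℕ) (x : ℝ) : ℝ :=
  powDerivTerm α a p.1 x * mittagLefflerTerm α (c * (t - x) ^ α) p.2

noncomputable def abcCoeff (α c t : ℝ) (a : ℕ → ℝ) (p : ℕ × ℕ) : ℝ :=
  a (p.1 + 1) * c ^ p.2 *
    (Gamma (α * (p.1 + 1) + 1) / Gamma (α * (p.1 + 1) + α * p.2 + 1)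
      * t ^ (α * (p.1 + 1) + α * p.2))

theorem mittagLefflerTerm_mul_rpow (α c : ℝ) {s : ℝ} (hs : 0 ≤ s) (n : ℕ) :
    mittagLefflerTerm α (c * s ^ α) n = c ^ n * s ^ (α * n) / Gamma (α * n + 1) := by
  rw [mittagLefflerTerm, mul_pow, rpow_mul_natCast hs]

theorem norm_powDerivTerm {α x : ℝ} (hα : 0 ≤ α) (hx : 0 ≤ x) (a : ℕ → ℝ) (k : ℕ) :
    ‖powDerivTerm α a k x‖ = powDerivTerm α (fun k => |a k|) k x := by
  rw [powDerivTerm, powDerivTerm, Real.norm_eq_abs, abs_mul,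
    abs_of_nonneg (by positivity : 0 ≤ α * (k + 1) * x ^ (α * (k + 1) - 1))]

theorem norm_mittagLefflerTerm {α : ℝ} (hα : 0 ≤ α) (z : ℝ) (n : ℕ) :
    ‖mittagLefflerTerm α z n‖ = mittagLefflerTerm α |z| n := by
  rw [mittagLefflerTerm, mittagLefflerTerm, Real.norm_eq_abs, abs_div, abs_pow,
    abs_of_pos (Gamma_pos_of_pos (by positivity))]

theorem norm_abcTerm {α c t x : ℝ} (hα : 0 ≤ α) (hx : x ∈ Icc 0 t) (a : ℕ → ℝ) (p : ℕ × ℕ) :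
    ‖abcTerm α c t a p x‖ = abcTerm α |c| t (fun k => |a k|) p x := by
  rw [abcTerm, abcTerm, norm_mul, norm_powDerivTerm hα hx.1, norm_mittagLefflerTerm hα, abs_mul,
    abs_of_nonneg (rpow_nonneg (sub_nonneg.2 hx.2) _)]

theorem integral_abcTerm {α c t : ℝ} (hα : 0 < α) (ht : 0 < t) (a : ℕ → ℝ) (p : ℕ × ℕ) :
    ∫ x in (0 : ℝ)..t, abcTerm α c t a p x = abcCoeff α c t a p := by
  obtain ⟨k, n⟩ := p
  calc ∫ x in (0 : ℝ)..t, abcTerm α c t a (k, n) x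
      = ∫ x in (0 : ℝ)..t, a (k + 1) * c ^ n * (1 / Gamma (α * n + 1) *
          ((t - x) ^ (α * n + 1 - 1) * (α * (k + 1) * x ^ (α * (k + 1) - 1)))) := by
        refine intervalIntegral.integral_congr fun x hx => ?_
        rw [uIcc_of_le ht.le] at hx
        rw [abcTerm, powDerivTerm, mittagLefflerTerm_mul_rpow _ _ (sub_nonneg.2 hx.2),
          add_sub_cancel_right]
        ring
    _ = a (k + 1) * c ^ n * RL 0 (α * n + 1) (fun x => α * (k + 1) * x ^ (α * (k + 1) - 1)) t := by
        rw [intervalIntegral.integral_const_mul, intervalIntegral.integral_const_mul, RL,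
          if_neg (by positivity)]
    _ = abcCoeff α c t a (k, n) := by
        rw [RL_mul_rpow_sub_one (by positivity) (by positivity) ht, abcCoeff]

theorem intervalIntegrable_abcTerm {α c t : ℝ} (hα : 0 < α) (a : ℕ → ℝ) (p : ℕ × ℕ) :
    IntervalIntegrable (abcTerm α c t a p) volume 0 t := by
  have hpow : IntervalIntegrable (fun x : ℝ => x ^ (α * (p.1 + 1) - 1)) volume 0 t :=
    intervalIntegral.intervalIntegrable_rpow' (by nlinarith [(p.1.cast_nonneg : (0 : ℝ) ≤ p.1)])
  have hML : Continuous fun x => mittagLefflerTerm α (c * (t - x) ^ α) p.2 :=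
    ((continuous_const.mul ((continuous_const.sub continuous_id).rpow_const
      fun _ => Or.inr hα.le)).pow _).div_const _
  exact ((hpow.const_mul (a (p.1 + 1) * (α * (p.1 + 1)))).mul_continuousOn
    hML.continuousOn).congr fun x _ => by simp only [abcTerm, powDerivTerm]; ring

theorem summable_norm_mittagLefflerTerm {α : ℝ} (hα0 : 0 < α) (hα1 : α < 1) (z : ℝ) :
    Summable fun n => ‖mittagLefflerTerm α z n‖ := by
  refine (summable_succ_mul_pow_div_Gamma hα0 hα1 |z|).of_nonneg_of_le (fun n => norm_nonneg _)
    fun n => ?_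
  rw [norm_mittagLefflerTerm hα0.le, mittagLefflerTerm, mul_div_assoc]
  exact le_mul_of_one_le_left (by positivity) (by simp)

theorem summable_norm_powDerivTerm {α R x : ℝ} {a : ℕ → ℝ} (hα : 0 < α)
    (hR : Summable fun k : ℕ => a k * R ^ (α * k)) (hx : 0 < x) (hxR : x < R) :
    Summable fun k => ‖powDerivTerm α a k x‖ := by
  refine (((summable_nat_add_iff 1).2 (summable_abs_mul_succ_mul_rpow hα hR hx.le hxR)).mul_left
    (α / x)).of_nonneg_of_le (fun k => norm_nonneg _) fun k => ?_
  rw [norm_powDerivTerm hα.le hx.le, powDerivTerm, rpow_sub hx, rpow_one]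
  push_cast
  calc |a (k + 1)| * (α * (k + 1) * (x ^ (α * (k + 1)) / x))
      = α / x * (|a (k + 1)| * ((k : ℝ) + 1) * x ^ (α * (k + 1))) := by ring
    _ ≤ α / x * (|a (k + 1)| * ((k : ℝ) + 1 + 1) * x ^ (α * (k + 1))) := by gcongr; linarith

theorem hasDerivAt_tsum_powDerivTerm {α R x : ℝ} {a : ℕ → ℝ} (hα : 0 < α)
    (hR : Summable fun k : ℕ => a k * R ^ (α * k)) (hx : 0 < x) (hxR : x < R) :
    HasDerivAt (fun y => ∑' k : ℕ, a k * y ^ (α * k)) (∑' k, powDerivTerm α a k x) x := by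
  convert hasDerivAt_tsum_mul_rpow hα hR hx hxR using 1
  rw [tsum_eq_zero_add' (f := fun k : ℕ => a k * (α * k * x ^ (α * k - 1))) ?_]
  · simp [powDerivTerm]
  · exact (summable_norm_powDerivTerm hα hR hx hxR).of_norm.congr fun k => by
      simp [powDerivTerm]

theorem deriv_mul_mittagLeffler_eq_tsum_abcTerm {α c t R x : ℝ} {f : ℝ → ℝ} {a : ℕ → ℝ}
    (hα0 : 0 < α) (hα1 : α < 1) (hR : Summable fun k : ℕ => a k * R ^ (α * k))
    (hf : EqOn f (fun y => ∑' k : ℕ, a k * y ^ (α * k)) (Ioo 0 R)) (hx : 0 < x) (hxR : x < R) :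
    deriv f x * mittagLeffler α (c * (t - x) ^ α) = ∑' p, abcTerm α c t a p x := by
  have hderiv : deriv f x = ∑' k, powDerivTerm α a k x :=
    ((hasDerivAt_tsum_powDerivTerm hα0 hR hx hxR).congr_of_eventuallyEq
      (eventuallyEq_of_mem (isOpen_Ioo.mem_nhds ⟨hx, hxR⟩) hf)).deriv
  rw [hderiv]
  exact tsum_mul_tsum_of_summable_norm (summable_norm_powDerivTerm hα0 hR hx hxR)
    (summable_norm_mittagLefflerTerm hα0 hα1 _)

theorem abcCoeff_abs_le {α c t : ℝ} (hα0 : 0 < α) (hα1 : α < 1) (ht : 0 < t) (a : ℕ → ℝ)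
    (k n : ℕ) :
    abcCoeff α |c| t (fun k => |a k|) (k, n)
      ≤ |a (k + 1)| * (((k + 1 : ℕ) : ℝ) + 1) * t ^ (α * (k + 1 : ℕ))
        * (((n : ℝ) + 1) * (|c| * t ^ α) ^ n / Gamma (α * n + 1)) := by
  have hΓ := Gamma_add_one_div_Gamma_add_add_one_le (p := α * (k + 1)) (q := α * n)
    (by positivity) (by positivity)
  have hdeg : α * (k + 1) + α * n + 1 ≤ ((k : ℝ) + 1 + 1) * (n + 1) := by
    nlinarith [(k.cast_nonneg : (0 : ℝ) ≤ k), (n.cast_nonneg : (0 : ℝ) ≤ n)]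
  rw [abcCoeff, rpow_add ht, mul_pow, ← rpow_mul_natCast ht.le]
  push_cast
  calc |a (k + 1)| * |c| ^ n * (Gamma (α * (k + 1) + 1) / Gamma (α * (k + 1) + α * n + 1)
        * (t ^ (α * (k + 1)) * t ^ (α * n)))
      ≤ |a (k + 1)| * |c| ^ n * ((α * (k + 1) + α * n + 1) / Gamma (α * n + 1)
        * (t ^ (α * (k + 1)) * t ^ (α * n))) := by gcongr
    _ ≤ |a (k + 1)| * |c| ^ n * (((k : ℝ) + 1 + 1) * (n + 1) / Gamma (α * n + 1)
        * (t ^ (α * (k + 1)) * t ^ (α * n))) := by gcongr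
    _ = _ := by ring

theorem summable_abcCoeff_abs {α c t R : ℝ} {a : ℕ → ℝ} (hα0 : 0 < α) (hα1 : α < 1)
    (ht : 0 < t) (htR : t < R) (hR : Summable fun k : ℕ => a k * R ^ (α * k)) :
    Summable (abcCoeff α |c| t fun k => |a k|) := by
  have hP := (summable_nat_add_iff 1).2 (summable_abs_mul_succ_mul_rpow hα0 hR ht.le htR)
  have hQ := summable_succ_mul_pow_div_Gamma hα0 hα1 (|c| * t ^ α)
  refine (hP.mul_of_nonneg hQ (fun k => by positivity) fun n => ?_).of_nonneg_of_le
    (fun p => ?_) fun p => abcCoeff_abs_le hα0 hα1 ht a p.1 p.2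
  · have := Gamma_pos_of_pos (by positivity : 0 < α * n + 1)
    positivity
  · have := Gamma_pos_of_pos (by positivity : 0 < α * (p.1 + 1) + α * p.2 + 1)
    have := Gamma_pos_of_pos (by positivity : 0 < α * (p.1 + 1) + 1)
    simp only [abcCoeff]
    positivity

theorem hasSum_abcCoeff {α c t R : ℝ} {a : ℕ → ℝ} (hα0 : 0 < α) (hα1 : α < 1)
    (ht : 0 < t) (htR : t < R) (hR : Summable fun k : ℕ => a k * R ^ (α * k)) :
    HasSum (abcCoeff α c t a) (∫ x in (0 : ℝ)..t, ∑' p, abcTerm α c t a p x) := by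
  have hint (c : ℝ) (a : ℕ → ℝ) (p : ℕ × ℕ) :
      ∫ x in Ioc 0 t, abcTerm α c t a p x = abcCoeff α c t a p := by
    rw [← intervalIntegral.integral_of_le ht.le, integral_abcTerm hα0 ht]
  have hnorm (p : ℕ × ℕ) :
      ∫ x in Ioc 0 t, ‖abcTerm α c t a p x‖ = abcCoeff α |c| t (fun k => |a k|) p := by
    rw [← hint, setIntegral_congr_fun measurableSet_Ioc
      fun x hx => norm_abcTerm hα0.le (Ioc_subset_Icc_self hx) a p]
  rw [intervalIntegral.integral_of_le ht.le]
  simpa only [hint] using hasSum_integral_of_summable_integral_norm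
    (fun p => (intervalIntegrable_abcTerm (c := c) (t := t) hα0 a p).1)
    (by simpa only [hnorm] using summable_abcCoeff_abs hα0 hα1 ht htR hR)

open Finset in
theorem hasSum_sum_antidiagonal_abcCoeff {α c t R : ℝ} {f : ℝ → ℝ} {a : ℕ → ℝ}
    (hα0 : 0 < α) (hα1 : α < 1) (ht : 0 < t) (htR : t < R)
    (hR : Summable fun k : ℕ => a k * R ^ (α * k))
    (hf : EqOn f (fun y => ∑' k : ℕ, a k * y ^ (α * k)) (Ioo 0 R)) :
    HasSum (fun m => ∑ p ∈ antidiagonal m, abcCoeff α c t a p)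
      (∫ x in (0 : ℝ)..t, deriv f x * mittagLeffler α (c * (t - x) ^ α)) := by
  convert (hasSum_abcCoeff hα0 hα1 ht htR hR).sum_antidiagonal using 1
  refine intervalIntegral.integral_congr_ae (Eventually.of_forall fun x hx => ?_)
  rw [uIoc_of_le ht.le] at hx
  exact deriv_mul_mittagLeffler_eq_tsum_abcTerm hα0 hα1 hR hf hx.1 (hx.2.trans_lt htR)

open Finset in
theorem sum_antidiagonal_abcCoeff (α c t : ℝ) (a : ℕ → ℝ) (m : ℕ) :
    ∑ p ∈ antidiagonal m, abcCoeff α c t a p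
      = (∑ k ∈ Finset.Icc 1 (m + 1), a k * c ^ (m + 1 - k)
          * (Gamma (k * α + 1) / Gamma ((m + 1) * α + 1))) * t ^ (α * (m + 1)) := by
  rw [Nat.sum_antidiagonal_eq_sum_range_succ_mk, ← Finset.Ico_add_one_right_eq_Icc,
    sum_Ico_eq_sum_range, Nat.add_sub_cancel, sum_mul]
  refine sum_congr rfl fun k hk => ?_
  have hkm : k ≤ m := Nat.lt_succ_iff.1 (mem_range.1 hk)
  rw [abcCoeff, add_comm 1 k, Nat.add_sub_add_right, Nat.cast_sub hkm]
  push_cast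
  ring_nf

theorem ABC_power_series_ansatz_general (α b B : ℝ) (f : ℝ → ℝ) (a : ℕ → ℝ)
    (hα0 : 0 < α) (hα1 : α < 1)
    (hf : ∀ t ∈ Set.Ioo (0:ℝ) b, f t = ∑' k : ℕ, a k * t ^ (α * k))
    (hconv : ∀ t ∈ Set.Ioo (0:ℝ) b, Summable fun k : ℕ => a k * t ^ (α * k)) :
    ∀ t ∈ Set.Ioo (0:ℝ) b,
      ABC B 0 α f t
        = ∑' m : ℕ,
            ((B / (1 - α)) * ∑ k ∈ Finset.Icc 1 (m + 1),
              a k * (-α / (1 - α)) ^ (m + 1 - k)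
                * (Real.Gamma (k * α + 1) / Real.Gamma ((m + 1) * α + 1)))
              * t ^ (α * (m + 1)) := by
  rintro t ⟨ht, htb⟩
  obtain ⟨R, htR, hRb⟩ := exists_between htb
  have hR := hconv R ⟨ht.trans htR, hRb⟩
  have hfR : EqOn f (fun y => ∑' k : ℕ, a k * y ^ (α * k)) (Ioo 0 R) :=
    fun y hy => hf y ⟨hy.1, hy.2.trans hRb⟩
  rw [ABC, ← (hasSum_sum_antidiagonal_abcCoeff hα0 hα1 ht htR hR hfR).tsum_eq, ← tsum_mul_left]
  simp only [sum_antidiagonal_abcCoeff, mul_assoc]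

/-- ABC derivative of the power series ansatz
`f(t) = Σ a_k t^{kα}`. -/
theorem ABC_power_series_ansatz (α b B : ℝ) (f : ℝ → ℝ) (a : ℕ → ℝ)
    (hα0 : 0 < α) (hα1 : α < 1) (hB : 0 < B) (hb : 0 < b)
    (hf : ∀ t ∈ Set.Ioo (0:ℝ) b, f t = ∑' k : ℕ, a k * t ^ (α * k))
    (hconv : ∀ t ∈ Set.Ioo (0:ℝ) b, Summable fun k : ℕ => a k * t ^ (α * k)) :
    ∀ t ∈ Set.Ioo (0:ℝ) b,
      ABC B 0 α f t
        = ∑' m : ℕ,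
            ((B / (1 - α)) * ∑ k ∈ Finset.Icc 1 (m + 1),
              a k * (-α / (1 - α)) ^ (m + 1 - k)
                * (Real.Gamma (k * α + 1) / Real.Gamma ((m + 1) * α + 1)))
              * t ^ (α * (m + 1)) :=
  ABC_power_series_ansatz_general α b B f a hα0 hα1 hf hconv
end
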